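/- Fix ρ > 1, a real number γ > 1, and n ∈ ℕ. Let F_ρ := { (ρe^{iθ} + ρ^{−1}e^{−iθ})/(ρ + ρ^{−1}) : θ ∈ [0, 2π] } be the ellipse with vertices ±1 and co-vertices ±i(ρ−ρ^{−1})/(ρ+ρ^{−1}), set w := γ·(ρ + ρ^{−1})/2 and s := w + √(w² − 1) (a real number greater than 1). Then: (a) every complex polynomial P of degree at most n with |P(z)| ≤ 1 for all z ∈ F_ρ satisfies |P(γ)| ≤ s^n/ρ^n; (b) there exists a complex polynomial P of degree at most n with |P(z)| ≤ 1 for all z ∈ F_ρ and |P(γ)| ≥ (s^n + s^{−n})/(ρ^n + ρ^{−n}). -/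

import Mathlib

/-!
Write `J u = (u + u⁻¹) / (ρ + ρ⁻¹)`. Then `J` maps the circle `‖u‖ = ρ` onto `F_ρ`, and
`J s = γ` because `s + s⁻¹ = 2 w`; moreover `ρ ≤ s`, since `x ↦ x + x⁻¹` increases on `[1, ∞)`.

(a) For `deg P ≤ n`, `ζ ↦ ζ ^ n * P (J (ρ ^ 2 / ζ))` is a polynomial; it is bounded by `ρ ^ n`
on the circle `‖ζ‖ = ρ`, so by the maximum modulus principle also at `ζ = ρ ^ 2 / s`, which is
the claimed bound on `|P γ|`.

(b) A rescaled Chebyshev polynomial satisfies `P (J u) = u ^ n + u⁻¹ ^ n`; dividing it by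
`ρ ^ n + ρ⁻¹ ^ n` makes it bounded by `1` on `F_ρ`, and its value at `γ = J s` is the claimed one.
-/

open Polynomial Complex Metric Set

theorem Polynomial.exists_eval_eq_pow_mul_eval_mul_add_div {K : Type*} [Field K] {P : K[X]}
    {n : ℕ} (hP : P.natDegree ≤ n) (a b : K) :
    ∃ Q : K[X], ∀ ζ : K, ζ ≠ 0 → Q.eval ζ = ζ ^ n * P.eval (a * ζ + b / ζ) := by
  refine ⟨∑ k ∈ Finset.range (n + 1), C (P.coeff k) * (C a * X ^ 2 + C b) ^ k * X ^ (n - k),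
    fun ζ hζ => ?_⟩
  rw [eval_finsetSum, eval_eq_sum_range' (Nat.lt_succ_of_le hP), Finset.mul_sum]
  refine Finset.sum_congr rfl fun k hk => ?_
  have hsplit : ζ ^ n = ζ ^ k * ζ ^ (n - k) := by
    rw [← pow_add, Nat.add_sub_cancel' (Nat.lt_succ_iff.mp (Finset.mem_range.mp hk))]
  have hquad : a * ζ ^ 2 + b = ζ * (a * ζ + b / ζ) := by field_simp
  simp only [eval_mul, eval_C, eval_pow, eval_add, eval_X, hsplit, hquad, mul_pow]
  ring

theorem Complex.norm_le_of_forall_norm_eq_le {E : Type*} [NormedAddCommGroup E]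
    [NormedSpace ℂ E] {f : ℂ → E} (hf : Differentiable ℂ f) {R M : ℝ} (hR : R ≠ 0)
    (hM : ∀ ζ : ℂ, ‖ζ‖ = R → ‖f ζ‖ ≤ M) {z : ℂ} (hz : ‖z‖ ≤ R) : ‖f z‖ ≤ M := by
  refine norm_le_of_forall_mem_frontier_norm_le (isBounded_ball (x := 0) (r := R))
    hf.diffContOnCl (fun ζ hζ => hM ζ ?_) ?_
  · simpa [frontier_ball _ hR] using hζ
  · simpa [closure_ball _ hR] using hz

theorem Polynomial.Chebyshev.T_eval_add_inv_div_two {K : Type*} [Field K] [CharZero K]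
    (n : ℕ) {x : K} (hx : x ≠ 0) :
    (T K n).eval ((x + x⁻¹) / 2) = (x ^ n + x⁻¹ ^ n) / 2 := by
  rw [chebyshev_T_eq_dickson_one_one, eval_mul, eval_C, eval_comp, eval_mul, eval_ofNat,
    eval_X, mul_div_cancel₀ _ two_ne_zero, dickson_one_one_eval_add_inv _ _ (mul_inv_cancel₀ hx),
    invOf_eq_inv, inv_mul_eq_div]

theorem add_inv_strictMonoOn : StrictMonoOn (fun x : ℝ => x + x⁻¹) (Ici 1) := by
  intro a (ha : 1 ≤ a) b (hb : 1 ≤ b) hab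
  have hdiff : b + b⁻¹ - (a + a⁻¹) = (b - a) * (a * b - 1) / (a * b) := by
    field_simp; ring
  have hpos : 0 < (b - a) * (a * b - 1) / (a * b) :=
    div_pos (mul_pos (by linarith) (by nlinarith)) (by positivity)
  show a + a⁻¹ < b + b⁻¹
  linarith

theorem add_sqrt_sq_sub_one_add_inv {w : ℝ} (hw : 1 ≤ w) :
    (w + √(w ^ 2 - 1)) + (w + √(w ^ 2 - 1))⁻¹ = 2 * w := by
  have hsq : √(w ^ 2 - 1) ^ 2 = w ^ 2 - 1 := Real.sq_sqrt (by nlinarith)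
  have hinv : (w + √(w ^ 2 - 1))⁻¹ = w - √(w ^ 2 - 1) :=
    inv_eq_of_mul_eq_one_right (by linear_combination -hsq)
  rw [hinv]
  ring

theorem image_Icc_eq_image_sphere_add_inv_div (R : ℝ) (c : ℂ) :
    (fun θ : ℝ => ((R : ℂ) * exp (I * θ) + (R : ℂ)⁻¹ * exp (-(I * θ))) / c) ''
        Icc 0 (2 * Real.pi) = (fun u : ℂ => (u + u⁻¹) / c) '' sphere 0 |R| := by
  have hcomp : (fun θ : ℝ => ((R : ℂ) * exp (I * θ) + (R : ℂ)⁻¹ * exp (-(I * θ))) / c) =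
      (fun u : ℂ => (u + u⁻¹) / c) ∘ circleMap 0 R := by
    ext θ
    simp only [Function.comp_apply, circleMap_zero, mul_inv, ← exp_neg, mul_comm I]
  have hcircle : circleMap 0 R '' Icc 0 (2 * Real.pi) = sphere 0 |R| :=
    Subset.antisymm (by rintro _ ⟨θ, -, rfl⟩; exact circleMap_mem_sphere' 0 R θ)
      (image_circleMap_Ioc 0 R ▸ image_mono Ioc_subset_Icc_self)
  rw [hcomp, image_comp, hcircle]

theorem norm_eval_add_inv_div_le {c : ℂ} {R M : ℝ} (hR : 0 < R) {P : ℂ[X]} {n : ℕ}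
    (hP : P.natDegree ≤ n) (hM : ∀ u : ℂ, ‖u‖ = R → ‖P.eval ((u + u⁻¹) / c)‖ ≤ M) {s : ℂ}
    (hs : R ≤ ‖s‖) : ‖P.eval ((s + s⁻¹) / c)‖ ≤ M * (‖s‖ / R) ^ n := by
  obtain ⟨Q, hQ⟩ := exists_eval_eq_pow_mul_eval_mul_add_div hP (c * R ^ 2)⁻¹ (R ^ 2 / c)
  have hR0 : (R : ℂ) ^ 2 ≠ 0 := pow_ne_zero 2 (ofReal_ne_zero.2 hR.ne')
  have hQ' : ∀ ζ : ℂ, ζ ≠ 0 →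
      Q.eval ζ = ζ ^ n * P.eval ((R ^ 2 / ζ + (R ^ 2 / ζ)⁻¹) / c) := fun ζ hζ => by
    rw [hQ ζ hζ]
    congr 2
    field_simp
    ring
  have hnorm_div : ∀ ζ : ℂ, ‖(R : ℂ) ^ 2 / ζ‖ = R ^ 2 / ‖ζ‖ := fun ζ => by
    rw [norm_div, norm_pow, norm_real, Real.norm_of_nonneg hR.le]
  have hsphere : ∀ ζ : ℂ, ‖ζ‖ = R → ‖Q.eval ζ‖ ≤ R ^ n * M := fun ζ hζ => by
    rw [hQ' ζ (norm_ne_zero_iff.1 (hζ ▸ hR.ne')), norm_mul, norm_pow, hζ]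
    refine mul_le_mul_of_nonneg_left (hM _ ?_) (by positivity)
    rw [hnorm_div, hζ, sq, mul_self_div_self]
  have hs0 : 0 < ‖s‖ := hR.trans_le hs
  have hζ₀ : ‖(R : ℂ) ^ 2 / s‖ ≤ R := by
    rw [hnorm_div, div_le_iff₀ hs0, sq]
    exact mul_le_mul_of_nonneg_left hs hR.le
  have hmax := norm_le_of_forall_norm_eq_le Q.differentiable hR.ne' hsphere hζ₀
  rw [hQ' _ (div_ne_zero hR0 (norm_pos_iff.1 hs0)), div_div_cancel₀ hR0, norm_mul, norm_pow,
    hnorm_div] at hmax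
  have hpos : 0 < (R ^ 2 / ‖s‖) ^ n := by positivity
  calc ‖P.eval ((s + s⁻¹) / c)‖ ≤ R ^ n * M / (R ^ 2 / ‖s‖) ^ n := by
        rw [le_div_iff₀ hpos, mul_comm]
        exact hmax
    _ = M * (‖s‖ / R) ^ n := by
        rw [div_pow, div_pow, ← pow_mul]
        field_simp
        ring

theorem exists_natDegree_le_eval_add_inv_div {K : Type*} [Field K] [CharZero K] (n : ℕ)
    {c : K} (hc : c ≠ 0) :
    ∃ P : K[X], P.natDegree ≤ n ∧ ∀ u : K, u ≠ 0 → P.eval ((u + u⁻¹) / c) = u ^ n + u⁻¹ ^ n := by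
  refine ⟨C 2 * (Chebyshev.T K n).comp (C (c / 2) * X), ?_, fun u hu => ?_⟩
  · refine (natDegree_C_mul_le _ _).trans (natDegree_comp_le.trans ?_)
    rw [Chebyshev.natDegree_T, Int.natAbs_natCast, natDegree_C_mul_X _ (div_ne_zero hc two_ne_zero),
      mul_one]
  · rw [eval_mul, eval_C, eval_comp, eval_mul, eval_C, eval_X,
      show c / 2 * ((u + u⁻¹) / c) = (u + u⁻¹) / 2 by field_simp,
      Chebyshev.T_eval_add_inv_div_two n hu, mul_div_cancel₀ _ two_ne_zero]

theorem exists_natDegree_le_norm_eval_add_inv_div_le_one (n : ℕ) {c : ℂ} (hc : c ≠ 0) {R : ℝ}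
    (hR : 0 < R) :
    ∃ P : ℂ[X], P.natDegree ≤ n ∧ (∀ u : ℂ, ‖u‖ = R → ‖P.eval ((u + u⁻¹) / c)‖ ≤ 1) ∧
      ∀ u : ℂ, u ≠ 0 → P.eval ((u + u⁻¹) / c) = (u ^ n + u⁻¹ ^ n) / (R ^ n + R⁻¹ ^ n : ℝ) := by
  obtain ⟨P, hP_deg, hP_eval⟩ := exists_natDegree_le_eval_add_inv_div n hc
  set r : ℝ := R ^ n + R⁻¹ ^ n
  have hr0 : 0 < r := by positivity
  refine ⟨C (r : ℂ)⁻¹ * P, (natDegree_C_mul_le _ _).trans hP_deg, fun u hu => ?_, fun u hu => ?_⟩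
  · rw [eval_mul, eval_C, hP_eval u (norm_ne_zero_iff.1 (hu ▸ hR.ne')), norm_mul, norm_inv,
      norm_real, Real.norm_of_nonneg hr0.le, inv_mul_le_one₀ hr0]
    calc ‖u ^ n + u⁻¹ ^ n‖ ≤ ‖u‖ ^ n + ‖u⁻¹‖ ^ n := by
          simpa only [norm_pow] using norm_add_le (u ^ n) (u⁻¹ ^ n)
      _ = r := by rw [norm_inv, hu]
  · rw [eval_mul, eval_C, hP_eval u hu, inv_mul_eq_div]

/-- Fix ρ > 1, a real γ > 1, and n ∈ ℕ. With F_ρ the ellipse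
{ (ρe^{iθ} + ρ^{−1}e^{−iθ})/(ρ + ρ^{−1}) : θ ∈ [0, 2π] }, w := γ·(ρ + ρ^{−1})/2 and
s := w + √(w² − 1): (a) every complex polynomial P of degree at most n with |P(z)| ≤ 1 on
F_ρ satisfies |P(γ)| ≤ s^n/ρ^n; (b) there exists a complex polynomial P of degree at most
n with |P(z)| ≤ 1 on F_ρ and |P(γ)| ≥ (s^n + s^{−n})/(ρ^n + ρ^{−n}). -/
theorem stmt_15
    (ρ : ℝ) (hρ : 1 < ρ)
    (γ : ℝ) (hγ : 1 < γ)
    (n : ℕ)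
    (F : Set ℂ)
    (hF : F = (fun θ : ℝ =>
        ((ρ : ℂ) * Complex.exp (Complex.I * θ)
          + (ρ : ℂ)⁻¹ * Complex.exp (-(Complex.I * θ))) / ((ρ : ℂ) + (ρ : ℂ)⁻¹)) ''
        Set.Icc (0 : ℝ) (2 * Real.pi))
    (w s : ℝ)
    (hw : w = γ * (ρ + ρ⁻¹) / 2)
    (hs : s = w + Real.sqrt (w ^ 2 - 1)) :
    (∀ P : Polynomial ℂ, P.degree ≤ n → (∀ z ∈ F, ‖P.eval z‖ ≤ 1) →
      ‖P.eval (γ : ℂ)‖ ≤ s ^ n / ρ ^ n) ∧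
    (∃ P : Polynomial ℂ, P.degree ≤ n ∧ (∀ z ∈ F, ‖P.eval z‖ ≤ 1) ∧
      (s ^ (n : ℤ) + s ^ (-(n : ℤ))) / (ρ ^ (n : ℤ) + ρ ^ (-(n : ℤ)))
        ≤ ‖P.eval (γ : ℂ)‖) := by
  have hρ0 : 0 < ρ := zero_lt_one.trans hρ
  have hρ2 : 2 ≤ ρ + ρ⁻¹ := by
    simpa [one_add_one_eq_two] using add_inv_strictMonoOn.monotoneOn (mem_Ici.2 le_rfl) hρ.le hρ.le
  have hw1 : 1 ≤ w := by rw [hw]; nlinarith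
  have hs_add : s + s⁻¹ = γ * (ρ + ρ⁻¹) := by
    rw [hs, add_sqrt_sq_sub_one_add_inv hw1, hw]
    ring
  have hs1 : 1 ≤ s := by rw [hs]; linarith [Real.sqrt_nonneg (w ^ 2 - 1)]
  have hρs : ρ ≤ s := (add_inv_strictMonoOn.le_iff_le hρ.le hs1).1 (by rw [hs_add]; nlinarith)
  have hc0 : (ρ : ℂ) + (ρ : ℂ)⁻¹ ≠ 0 := by exact_mod_cast (by linarith : ρ + ρ⁻¹ ≠ 0)
  have hγ_eq : (γ : ℂ) = ((s : ℂ) + (s : ℂ)⁻¹) / ((ρ : ℂ) + (ρ : ℂ)⁻¹) := by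
    rw [eq_div_iff hc0]
    exact_mod_cast hs_add.symm
  have hs_norm : ‖(s : ℂ)‖ = s := by rw [norm_real, Real.norm_of_nonneg (by linarith)]
  rw [image_Icc_eq_image_sphere_add_inv_div, abs_of_pos hρ0] at hF
  subst hF
  simp only [Set.forall_mem_image, mem_sphere_zero_iff_norm]
  constructor
  · intro P hP hbound
    have h := norm_eval_add_inv_div_le hρ0 (natDegree_le_iff_degree_le.2 hP) hbound
      (hρs.trans hs_norm.ge)
    rwa [← hγ_eq, hs_norm, one_mul, div_pow] at h
  · obtain ⟨P, hP_deg, hP_bound, hP_eval⟩ :=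
      exists_natDegree_le_norm_eval_add_inv_div_le_one n hc0 hρ0
    refine ⟨P, natDegree_le_iff_degree_le.1 hP_deg, hP_bound, ?_⟩
    rw [hγ_eq, hP_eval s (by exact_mod_cast (by linarith : s ≠ 0)),
      zpow_neg, zpow_neg, zpow_natCast, zpow_natCast, ← inv_pow, ← inv_pow,
      show ((s : ℂ) ^ n + (s : ℂ)⁻¹ ^ n) / ((ρ ^ n + ρ⁻¹ ^ n : ℝ) : ℂ) =
        (((s ^ n + s⁻¹ ^ n) / (ρ ^ n + ρ⁻¹ ^ n) : ℝ) : ℂ) by push_cast; ring,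
      norm_real, Real.norm_of_nonneg (by positivity)]
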